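/- arXiv:1510.02833 — 4 statements merged into one kernel-verified Lean document; each statement's English description precedes it below -/
import Mathlib

section
/- For any kernel K : X × X → ℝ and any integer n ≥ 1, the n-fold nested transformation satisfies the closed form K_T^{(n)}(x,y) = K(x,y) / (2^{n-1}[K(x,x) + K(y,y)] - (2^n - 1)K(x,y)), wherever all intermediate denominators are nonzero. -/
/-- The normalizing transformation `K_T(x,y) = K(x,y)/(K(x,x)+K(y,y)-K(x,y))`
(defined to be `1` when the denominator vanishes). -/
noncomputable def ktrans {X : Type*} (K : X → X → ℝ) : X → X → ℝ := fun x y =>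
  if K x x + K y y - K x y = 0 then 1 else K x y / (K x x + K y y - K x y)

lemma ktrans_diag {X : Type*} (L : X → X → ℝ) (x : X) : ktrans L x x = 1 := by
  unfold ktrans
  simp only [show L x x + L x x - L x x = L x x from by ring]
  rcases eq_or_ne (L x x) 0 with h | h
  · simp [h]
  · simp [h, div_self h]

lemma ktrans_aux {X : Type*} (K : X → X → ℝ) (x y : X) :
    ∀ m : ℕ, (∀ k < m + 1,
      (ktrans^[k] K) x x + (ktrans^[k] K) y y - (ktrans^[k] K) x y ≠ 0) →
    (ktrans^[m+1] K) x y =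
      K x y / ((2 : ℝ) ^ m * (K x x + K y y) - ((2 : ℝ) ^ (m+1) - 1) * K x y) ∧
    (K x y ≠ 0 → (2 : ℝ) ^ m * (K x x + K y y) - ((2 : ℝ) ^ (m+1) - 1) * K x y ≠ 0) := by
  intro m
  induction m with
  | zero =>
    intro hd0
    have h0 := hd0 0 (by norm_num)
    simp only [Function.iterate_zero, id_eq] at h0
    have heq : (2:ℝ) ^ 0 * (K x x + K y y) - ((2:ℝ) ^ 1 - 1) * K x y
        = K x x + K y y - K x y := by ring
    constructor
    · simp only [zero_add, Function.iterate_one, heq]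
      unfold ktrans
      rw [if_neg h0]
    · intro _
      rw [heq]; exact h0
  | succ m ih =>
    intro hden
    have ih' := ih (fun k hk => hden k (by omega))
    set D : ℝ := (2 : ℝ) ^ m * (K x x + K y y) - ((2 : ℝ) ^ (m+1) - 1) * K x y with hD
    set L : X → X → ℝ := ktrans^[m+1] K with hL
    have hLxx : L x x = 1 := by
      rw [hL, Function.iterate_succ_apply']; exact ktrans_diag _ x
    have hLyy : L y y = 1 := by
      rw [hL, Function.iterate_succ_apply']; exact ktrans_diag _ y
    have hdn := hden (m+1) (by omega)
    rw [← hL] at hdn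
    have hxy : L x y = K x y / D := ih'.1
    have hstep : (ktrans^[m+2] K) x y = L x y / (2 - L x y) := by
      rw [show m + 2 = (m+1) + 1 from rfl, Function.iterate_succ_apply', ← hL]
      unfold ktrans
      rw [if_neg hdn, hLxx, hLyy]
      ring_nf
    have hD2 : (2:ℝ) ^ (m+1) * (K x x + K y y) - ((2:ℝ) ^ (m+2) - 1) * K x y
        = 2 * D - K x y := by rw [hD]; ring
    rcases eq_or_ne (K x y) 0 with hc | hc
    · constructor
      · rw [hstep, hxy, hc]
        simp
      · intro h; exact absurd hc h
    · have hDne : D ≠ 0 := ih'.2 hc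
      have h2c : 2 - L x y ≠ 0 := by
        rw [hLxx, hLyy] at hdn
        intro h; apply hdn; linarith
      have hD2ne : 2 * D - K x y ≠ 0 := by
        have : 2 * D - K x y = (2 - L x y) * D := by
          rw [hxy]; field_simp
        rw [this]
        exact mul_ne_zero h2c hDne
      constructor
      · rw [hstep, hxy, hD2]
        rw [hxy] at h2c
        field_simp
      · intro _; rw [hD2]; exact hD2ne

/-- Closed form of the `n`-fold nested transformation:
`K_T^{(n)}(x,y) = K(x,y) / (2^{n-1}[K(x,x)+K(y,y)] - (2^n - 1) K(x,y))`,
wherever all intermediate denominators are nonzero. -/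
theorem ktrans_iterate_closed_form {X : Type*} (K : X → X → ℝ) (x y : X)
    (n : ℕ) (hn : 1 ≤ n)
    (hden : ∀ m < n,
      (ktrans^[m] K) x x ≠ 0 ∧ (ktrans^[m] K) y y ≠ 0 ∧
      (ktrans^[m] K) x x + (ktrans^[m] K) y y - (ktrans^[m] K) x y ≠ 0) :
    (ktrans^[n] K) x y =
      K x y / ((2 : ℝ) ^ (n - 1) * (K x x + K y y) - ((2 : ℝ) ^ n - 1) * K x y) := by
  obtain ⟨m, rfl⟩ : ∃ m, n = m + 1 := ⟨n - 1, by omega⟩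
  have := (ktrans_aux K x y m (fun k hk => (hden k hk).2.2)).1
  simpa using this
end

section
/- The Jaccard index J(A,B) = |A ∩ B| / |A ∪ B| (with J(∅,∅) defined to be 1) is a positive definite kernel on the family of finite subsets of a set X. -/
/-!
Min-hashing. For a uniformly random permutation `σ` of a finite ambient type, `min σ(A) = min σ(B)`
exactly when the `σ`-least element of `A ∪ B` lies in `A ∩ B`, and each element of `A ∪ B` is the
`σ`-least one equally often, so this happens with probability `|A ∩ B| / |A ∪ B|`. The Jaccard
index is therefore an average of the kernels `[f A = f B]`, each of which is positive semidefinite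
as a sum of squares. A finite family of subsets of `X` lives in a finite ambient type, and the
Jaccard index does not see the embedding.
-/

/-- The Jaccard index on finite subsets, with `J(∅,∅) = 1`. -/
noncomputable def jaccard {X : Type*} [DecidableEq X] (A B : Finset X) : ℝ :=
  if A ∪ B = ∅ then 1 else ((A ∩ B).card : ℝ) / ((A ∪ B).card : ℝ)

open Finset

section Kernel
variable {α : Type*}

def IsPosSemidefKernel (K : α → α → ℝ) : Prop :=
  ∀ (n : ℕ) (a : Fin n → α) (c : Fin n → ℝ), 0 ≤ ∑ i, ∑ j, c i * c j * K (a i) (a j)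

theorem isPosSemidefKernel_ite_eq {β : Type*} [DecidableEq β] (f : α → β) :
    IsPosSemidefKernel fun a b => if f a = f b then (1 : ℝ) else 0 := by
  intro n a c
  have hmaps : ∀ i ∈ (univ : Finset (Fin n)), f (a i) ∈ univ.image (f ∘ a) :=
    fun i _ => mem_image_of_mem _ (mem_univ i)
  have hsquares : ∑ i, ∑ j, c i * c j * (if f (a i) = f (a j) then 1 else 0) =
      ∑ v ∈ univ.image (f ∘ a), (∑ i with f (a i) = v, c i) ^ 2 := by
    simp_rw [sq, sum_mul_sum]
    rw [← sum_fiberwise_of_maps_to hmaps]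
    refine sum_congr rfl fun v _ => sum_congr rfl fun i hi => ?_
    rw [(mem_filter.1 hi).2.symm]
    simp [sum_filter, eq_comm]
  rw [hsquares]
  positivity

theorem IsPosSemidefKernel.sum {ι : Type*} (s : Finset ι) {K : ι → α → α → ℝ}
    (hK : ∀ k ∈ s, IsPosSemidefKernel (K k)) : IsPosSemidefKernel fun a b => ∑ k ∈ s, K k a b := by
  intro n a c
  simp_rw [mul_sum]
  calc 0 ≤ ∑ k ∈ s, ∑ i, ∑ j, c i * c j * K k (a i) (a j) := sum_nonneg fun k hk => hK k hk n a c
    _ = ∑ i, ∑ k ∈ s, ∑ j, c i * c j * K k (a i) (a j) := Finset.sum_comm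
    _ = _ := sum_congr rfl fun i _ => Finset.sum_comm

theorem IsPosSemidefKernel.const_mul {K : α → α → ℝ} (hK : IsPosSemidefKernel K) {r : ℝ}
    (hr : 0 ≤ r) : IsPosSemidefKernel fun a b => r * K a b := by
  intro n a c
  have := mul_nonneg hr (hK n a c)
  simpa only [mul_sum, mul_left_comm r] using this

end Kernel

section MinHash

open Equiv
open scoped Nat

variable {α : Type*} [LinearOrder α]

def minHash (σ : Perm α) (A : Finset α) : WithTop α := (A.image σ).min

theorem minHash_union (σ : Perm α) (A B : Finset α) :
    minHash σ (A ∪ B) = min (minHash σ A) (minHash σ B) := by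
  rw [minHash, image_union, min_union]
  rfl

theorem minHash_mul_swap (σ : Perm α) {S : Finset α} {x y : α} (hx : x ∈ S) (hy : y ∈ S) :
    minHash (σ * swap x y) S = minHash σ S := by
  have hswap : S.image (swap x y) = S := by
    have hsupp : {z | swap x y z ≠ z} ⊆ S := fun z hz => by
      obtain ⟨-, rfl | rfl⟩ := swap_apply_ne_self_iff.1 hz <;> assumption
    simpa [map_eq_image] using map_perm hsupp
  rw [minHash, Perm.coe_mul, ← image_image, hswap, minHash]

theorem minHash_eq_minHash_iff {A B : Finset α} (h : (A ∪ B).Nonempty) (σ : Perm α) :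
    minHash σ A = minHash σ B ↔ ∃ x ∈ A ∩ B, minHash σ (A ∪ B) = σ x := by
  constructor
  · intro hAB
    obtain ⟨m, hm⟩ := min_of_nonempty (h.image σ)
    have hBm : minHash σ B = m := by
      rw [← min_self (minHash σ B)]
      nth_rw 1 [← hAB]
      rw [← minHash_union]
      exact hm
    obtain ⟨x, hxB, rfl⟩ := mem_image.1 (mem_of_min hBm)
    obtain ⟨y, hyA, hyx⟩ := mem_image.1 (mem_of_min (hAB.trans hBm))
    rw [σ.injective hyx] at hyA
    exact ⟨x, mem_inter.2 ⟨hyA, hxB⟩, hm⟩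
  · rintro ⟨x, hx, hmin⟩
    rw [mem_inter] at hx
    have hge : σ x ≤ min (minHash σ A) (minHash σ B) := (minHash_union σ A B ▸ hmin).ge
    have hA : minHash σ A = σ x :=
      le_antisymm (min_le (mem_image_of_mem σ hx.1)) (hge.trans (min_le_left _ _))
    have hB : minHash σ B = σ x :=
      le_antisymm (min_le (mem_image_of_mem σ hx.2)) (hge.trans (min_le_right _ _))
    rw [hA, hB]

variable [Fintype α]

def minimizingPerms (S : Finset α) (x : α) : Finset (Perm α) := {σ | minHash σ S = σ x}

theorem mem_minimizingPerms {S : Finset α} {x : α} {σ : Perm α} :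
    σ ∈ minimizingPerms S x ↔ minHash σ S = σ x := by
  simp [minimizingPerms]

theorem pairwiseDisjoint_minimizingPerms (S : Finset α) (T : Set α) :
    T.PairwiseDisjoint (minimizingPerms S) := by
  intro x _ y _ hxy
  refine disjoint_left.2 fun σ hx hy => hxy (σ.injective ?_)
  rw [mem_minimizingPerms] at hx hy
  exact WithTop.coe_injective (hx.symm.trans hy)

theorem biUnion_minimizingPerms {S : Finset α} (hS : S.Nonempty) :
    S.biUnion (minimizingPerms S) = univ := by
  refine eq_univ_of_forall fun σ => ?_
  obtain ⟨m, hm⟩ := min_of_nonempty (hS.image σ)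
  obtain ⟨x, hx, rfl⟩ := mem_image.1 (mem_of_min hm)
  exact mem_biUnion.2 ⟨x, hx, mem_minimizingPerms.2 hm⟩

theorem card_minimizingPerms_eq {S : Finset α} {x y : α} (hx : x ∈ S) (hy : y ∈ S) :
    #(minimizingPerms S x) = #(minimizingPerms S y) := by
  refine card_equiv (Equiv.mulRight (swap x y)) fun σ => ?_
  simp [mem_minimizingPerms, minHash_mul_swap σ hx hy]

theorem card_minimizingPerms_mul_card {S : Finset α} {x : α} (hx : x ∈ S) :
    #(minimizingPerms S x) * #S = (Fintype.card α)! := by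
  calc #(minimizingPerms S x) * #S = ∑ y ∈ S, #(minimizingPerms S y) := by
        rw [sum_congr rfl fun y hy => card_minimizingPerms_eq hy hx, sum_const, smul_eq_mul,
          mul_comm]
    _ = #(S.biUnion (minimizingPerms S)) :=
        (card_biUnion (pairwiseDisjoint_minimizingPerms S S)).symm
    _ = (Fintype.card α)! := by
        rw [biUnion_minimizingPerms ⟨x, hx⟩, card_univ, Fintype.card_perm]

theorem card_minHash_eq_mul_card_union (A B : Finset α) :
    #{σ : Perm α | minHash σ A = minHash σ B} * #(A ∪ B) = (Fintype.card α)! * #(A ∩ B) := by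
  rcases (A ∪ B).eq_empty_or_nonempty with h | h
  · rw [h, subset_empty.1 (inter_subset_union.trans h.subset)]
    simp
  · have hcollide : ({σ | minHash σ A = minHash σ B} : Finset (Perm α)) =
        (A ∩ B).biUnion (minimizingPerms (A ∪ B)) := by
      ext σ
      simp [mem_minimizingPerms, minHash_eq_minHash_iff h]
    rw [hcollide, card_biUnion (pairwiseDisjoint_minimizingPerms _ _), sum_mul,
      sum_congr rfl fun x hx => card_minimizingPerms_mul_card (inter_subset_union hx),
      sum_const, smul_eq_mul, mul_comm]

theorem jaccard_eq_card_minHash_eq_div (A B : Finset α) :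
    jaccard A B = #{σ : Perm α | minHash σ A = minHash σ B} / (Fintype.card α)! := by
  have hfact : ((Fintype.card α)! : ℝ) ≠ 0 := by positivity
  rcases eq_or_ne (A ∪ B) ∅ with h | h
  · obtain ⟨rfl, rfl⟩ := union_eq_empty.1 h
    simp [jaccard, Fintype.card_perm, hfact]
  · have hunion : ((A ∪ B).card : ℝ) ≠ 0 := by simpa using h
    rw [jaccard, if_neg h, div_eq_div_iff hunion hfact, mul_comm]
    exact_mod_cast (card_minHash_eq_mul_card_union A B).symm

theorem isPosSemidefKernel_jaccard_of_fintype :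
    IsPosSemidefKernel (jaccard : Finset α → Finset α → ℝ) := by
  have hcollision := IsPosSemidefKernel.sum (univ : Finset (Perm α)) fun σ _ =>
    isPosSemidefKernel_ite_eq (minHash σ)
  convert hcollision.const_mul (inv_nonneg.2 (Nat.cast_nonneg (Fintype.card α)!)) using 3 with A B
  rw [jaccard_eq_card_minHash_eq_div, sum_boole, div_eq_inv_mul]

end MinHash

section Transfer

variable {X : Type*} [DecidableEq X]

theorem jaccard_comm (A B : Finset X) : jaccard A B = jaccard B A := by
  rw [jaccard, jaccard, union_comm, inter_comm]

theorem jaccard_map {Y : Type*} [DecidableEq Y] (f : X ↪ Y) (A B : Finset X) :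
    jaccard (A.map f) (B.map f) = jaccard A B := by
  simp only [jaccard, ← map_union, ← map_inter, map_eq_empty, card_map]

theorem exists_fin_embedding_map_eq {ι : Type*} [Fintype ι] (A : ι → Finset X) :
    ∃ (N : ℕ) (φ : Fin N ↪ X) (B : ι → Finset (Fin N)), ∀ i, (B i).map φ = A i := by
  set U := univ.biUnion A
  let φ : Fin #U ↪ X := U.equivFin.symm.toEmbedding.trans (Function.Embedding.subtype _)
  refine ⟨#U, φ, fun i => {k | φ k ∈ A i}, fun i => ?_⟩
  ext x
  simp only [mem_map, mem_filter, mem_univ, true_and]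
  refine ⟨fun ⟨k, hk, hkx⟩ => hkx ▸ hk, fun hx => ⟨U.equivFin ⟨x, ?_⟩, ?_⟩⟩
  · exact mem_biUnion.2 ⟨i, mem_univ i, hx⟩
  · simpa [φ] using hx

theorem isPosSemidefKernel_jaccard : IsPosSemidefKernel (jaccard : Finset X → Finset X → ℝ) := by
  intro n A c
  obtain ⟨N, φ, B, hB⟩ := exists_fin_embedding_map_eq A
  simp only [← hB, jaccard_map]
  exact isPosSemidefKernel_jaccard_of_fintype n B c

end Transfer

/-- The Jaccard index is a positive definite kernel on the family of finite subsets. -/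
theorem jaccard_posdef {X : Type*} [DecidableEq X] :
    (∀ A B : Finset X, jaccard A B = jaccard B A) ∧
    (∀ (n : ℕ) (A : Fin n → Finset X) (c : Fin n → ℝ),
      0 ≤ ∑ i, ∑ j, c i * c j * jaccard (A i) (A j)) :=
  ⟨jaccard_comm, isPosSemidefKernel_jaccard⟩
end

section
/- The kernel D(A,B) = |μ(A) - μ(B)| / max{μ(A), μ(B)} (defined to be 0 when both measures are 0), where μ assigns a nonnegative real mass to each set, is conditionally negative definite. -/
/-!
For `a, b ≥ 0` not both zero, `|a - b| / max a b = 1 - min a b / max a b`, and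
`min a b / max a b = a⁻¹ b⁻¹ min (a², b²)`; with Lean's `0⁻¹ = 0` this also holds when one of
them vanishes. Hence `D(a, b) = 1 - [a = 0][b = 0] - a⁻¹ b⁻¹ min (a², b²)` in all cases.
Against coefficients summing to zero the constant term drops out, the indicator term is a
square, and the last term is a rescaled `min` kernel, which is positive semidefinite because
`min x y` is the measure of `(0, x] ∩ (0, y]`, a Gram kernel of indicators in `L²(ℝ)`.
-/

open Finset MeasureTheory

theorem Matrix.PosSemidef.sum_mul_mul_nonneg {ι : Type*} [Fintype ι] {M : Matrix ι ι ℝ}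
    (hM : M.PosSemidef) (c : ι → ℝ) : 0 ≤ ∑ i, ∑ j, c i * c j * M i j := by
  refine (hM.dotProduct_mulVec_nonneg c).trans_eq ?_
  simp only [dotProduct, mulVec, Pi.star_apply, star_trivial, mul_sum]
  exact sum_congr rfl fun i _ ↦ sum_congr rfl fun j _ ↦ by ring

theorem volume_real_Ioc_zero_inter {a b : ℝ} (ha : 0 ≤ a) (hb : 0 ≤ b) :
    volume.real (Set.Ioc 0 a ∩ Set.Ioc 0 b) = min a b := by
  rw [Set.Ioc_inter_Ioc, max_self, Real.volume_real_Ioc, sub_zero, max_eq_left (le_min ha hb)]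

theorem sum_mul_min_nonneg {ι : Type*} [Fintype ι] (x c : ι → ℝ) (hx : ∀ i, 0 ≤ x i) :
    0 ≤ ∑ i, ∑ j, c i * c j * min (x i) (x j) := by
  have := (posSemidef_matrix_measure_inter (μ := volume) (s := fun i ↦ Set.Ioc 0 (x i))
    (fun _ ↦ measurableSet_Ioc) fun _ ↦ measure_Ioc_lt_top.ne).sum_mul_mul_nonneg c
  simpa only [Matrix.of_apply, volume_real_Ioc_zero_inter (hx _) (hx _)] using this

theorem min_div_max_eq {a b : ℝ} (ha : 0 ≤ a) (hb : 0 ≤ b) :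
    min a b / max a b = a⁻¹ * b⁻¹ * min (a ^ 2) (b ^ 2) := by
  wlog hab : a ≤ b generalizing a b
  · rw [min_comm, max_comm, min_comm (a ^ 2), mul_comm a⁻¹]
    exact this hb ha (le_of_not_ge hab)
  rw [min_eq_left hab, max_eq_right hab, min_eq_left (pow_le_pow_left₀ ha hab 2)]
  rcases ha.eq_or_lt with rfl | ha'
  · simp
  · field_simp

theorem ite_abs_sub_div_max_eq {a b : ℝ} (ha : 0 ≤ a) (hb : 0 ≤ b) :
    (if a = 0 ∧ b = 0 then 0 else |a - b| / max a b) =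
      1 - (if a = 0 then 1 else 0) * (if b = 0 then 1 else 0) -
        a⁻¹ * b⁻¹ * min (a ^ 2) (b ^ 2) := by
  by_cases h : a = 0 ∧ b = 0
  · simp [h]
  have hmax : 0 < max a b := by
    rcases not_and_or.mp h with h | h
    · exact (ha.lt_of_ne' h).trans_le (le_max_left a b)
    · exact (hb.lt_of_ne' h).trans_le (le_max_right a b)
  have hz : (if a = 0 then (1 : ℝ) else 0) * (if b = 0 then 1 else 0) = 0 := by
    rcases not_and_or.mp h with h | h <;> simp [h]
  rw [if_neg h, hz, ← max_sub_min_eq_abs', sub_div, div_self hmax.ne', min_div_max_eq ha hb,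
    sub_zero]

/-- The kernel `D(A,B) = |μ(A) - μ(B)| / max{μ(A), μ(B)}` (defined to be `0` when both
masses are `0`), for a nonnegative mass assignment `μ`, is conditionally negative
definite. -/
theorem normalized_mass_difference_cnd {S : Type*} (μ : S → ℝ) (hμ : ∀ A, 0 ≤ μ A)
    (n : ℕ) (A : Fin n → S) (c : Fin n → ℝ) (hc : ∑ i, c i = 0) :
    ∑ i, ∑ j, c i * c j *
      (if μ (A i) = 0 ∧ μ (A j) = 0 then (0 : ℝ)
        else |μ (A i) - μ (A j)| / max (μ (A i)) (μ (A j))) ≤ 0 := by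
  have hsplit : ∀ i j, c i * c j *
      (if μ (A i) = 0 ∧ μ (A j) = 0 then 0 else |μ (A i) - μ (A j)| / max (μ (A i)) (μ (A j))) =
        c i * c j - (if μ (A i) = 0 then c i else 0) * (if μ (A j) = 0 then c j else 0) -
          c i * (μ (A i))⁻¹ * (c j * (μ (A j))⁻¹) * min (μ (A i) ^ 2) (μ (A j) ^ 2) := by
    intro i j
    rw [ite_abs_sub_div_max_eq (hμ _) (hμ _)]
    split_ifs <;> ring
  have hmin := sum_mul_min_nonneg (fun i ↦ μ (A i) ^ 2) (fun i ↦ c i * (μ (A i))⁻¹)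
    fun _ ↦ sq_nonneg _
  simp only [hsplit, sum_sub_distrib, ← mul_sum, ← sum_mul, hc]
  linarith [mul_self_nonneg (∑ i, if μ (A i) = 0 then c i else 0)]
end

section
/- Let u, v be probability measures on ℝ with cumulative distribution functions U, V and quantile functions U^{-1}, V^{-1}, and let the ground distance be D(a,b) = h(a-b) with h : ℝ → ℝ_{≥0} even and convex. If D is conditionally negative definite on ℝ, then EMD(u,v) = ∫_0^1 D(U^{-1}(s), V^{-1}(s)) ds is conditionally negative definite on the space of such probability measures: for finitely many measures u_1,...,u_n and reals c_1,...,c_n with ∑ c_i = 0, ∑_{i,j} c_i c_j EMD(u_i,u_j) ≤ 0. -/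
open MeasureTheory

/-- One-dimensional optimal transport: for a ground distance `D(a,b) = h(a-b)` with `h`
nonnegative, even and convex, if `D` is conditionally negative definite on `ℝ` then the
Earth Mover's Distance `EMD(u,v) = ∫₀¹ D(U⁻¹(s), V⁻¹(s)) ds` (expressed via quantile
functions `Q i`) is conditionally negative definite on probability measures on `ℝ`. -/
theorem emd_real_line_cnd (h : ℝ → ℝ)
    (hnonneg : ∀ t, 0 ≤ h t) (heven : ∀ t, h (-t) = h t)
    (hconv : ConvexOn ℝ Set.univ h)
    (hcnd : ∀ (n : ℕ) (x : Fin n → ℝ) (c : Fin n → ℝ), (∑ i, c i = 0) →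
      ∑ i, ∑ j, c i * c j * h (x i - x j) ≤ 0)
    (n : ℕ) (Q : Fin n → ℝ → ℝ) (hmono : ∀ i, MonotoneOn (Q i) (Set.Ioo 0 1))
    (hint : ∀ i j, IntegrableOn (fun s => h (Q i s - Q j s)) (Set.Ioo (0 : ℝ) 1))
    (c : Fin n → ℝ) (hc : ∑ i, c i = 0) :
    ∑ i, ∑ j, c i * c j * ∫ s in Set.Ioo (0 : ℝ) 1, h (Q i s - Q j s) ≤ 0 := by
  have key : ∑ i, ∑ j, c i * c j * ∫ s in Set.Ioo (0 : ℝ) 1, h (Q i s - Q j s)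
      = ∫ s in Set.Ioo (0 : ℝ) 1, ∑ i, ∑ j, c i * c j * h (Q i s - Q j s) := by
    rw [integral_finset_sum]
    · refine Finset.sum_congr rfl fun i _ => ?_
      rw [integral_finset_sum]
      · exact Finset.sum_congr rfl fun j _ => (integral_const_mul _ _).symm
      · exact fun j _ => ((hint i j).const_mul _)
    · intro i _
      exact integrable_finset_sum _ fun j _ => ((hint i j).const_mul _)
  rw [key]
  apply integral_nonpos
  intro s
  exact hcnd n (fun i => Q i s) c hc
end
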